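/- (Decay rate of integrated MSE under an O(1/m) approximation error, as for bounded-variation fields in the Fourier basis on [0,1].) In the binary-sensing model on D = [0,1] with inf_{x∈[0,1]} p_X(x) = ν > 0, suppose there is a constant σ > 0 such that the m-term approximation error satisfies ε[f, m] = Σ_{j=m}^∞ |⟨f, φ_j⟩|² ≤ σ/m for all m ≥ 1. Then for all m ≥ 1 and every zero-mean noise distribution supported in [−b, b], E[‖f − f̂_{n,m}‖²] ≤ c² m/(n ν) + σ/m, and with the choice m(n) = ⌈√n⌉ the integrated MSE satisfies E[‖f − f̂_{n,m(n)}‖²] = O(1/√n). -/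

import Mathlib

open MeasureTheory ProbabilityTheory Filter
open scoped ENNReal Topology

noncomputable section

/-- Sign function: `+1` if `u > 0` and `-1` otherwise. -/
def sgn' (u : ℝ) : ℝ := if 0 < u then 1 else -1

/-- Binary-quantized observation of sensor `i`: `B i = sgn (f (X i) + Z i - T i)`. -/
def obsB {E Ω : Type*} (f : E → ℝ) (X : ℕ → Ω → E) (Z T : ℕ → Ω → ℝ)
    (i : ℕ) (ω : Ω) : ℝ :=
  sgn' (f (X i ω) + Z i ω - T i ω)

/-- Estimate of the `j`-th coefficient from the first `n` sensors:
`α̂_j = (c/n) ∑_{i<n} (φ_j(X_i))^* / p_X(X_i) * B_i`. -/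
def alphaHat {E Ω : Type*} (c : ℝ) (pX : E → ℝ) (φ : ℕ → E → ℂ) (f : E → ℝ)
    (X : ℕ → Ω → E) (Z T : ℕ → Ω → ℝ) (n j : ℕ) (ω : Ω) : ℂ :=
  ((c : ℂ) / (n : ℂ)) * ∑ i ∈ Finset.range n,
    (starRingEnd ℂ) (φ j (X i ω)) / (pX (X i ω) : ℂ) * (obsB f X Z T i ω : ℂ)

/-- The `j`-th coefficient of the field `f`: `α_j = ⟨f, φ_j⟩ = ∫_D f (φ_j)^*`. -/
def coeff {E : Type*} [MeasureSpace E] (D : Set E) (f : E → ℝ) (φ : ℕ → E → ℂ)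
    (j : ℕ) : ℂ :=
  ∫ x in D, (f x : ℂ) * (starRingEnd ℂ) (φ j x)

/-- The `m`-term field estimate `f̂_{n,m} = ∑_{j<m} α̂_j φ_j`. -/
def fieldEst {E Ω : Type*} (c : ℝ) (pX : E → ℝ) (φ : ℕ → E → ℂ) (f : E → ℝ)
    (X : ℕ → Ω → E) (Z T : ℕ → Ω → ℝ) (n m : ℕ) (x : E) (ω : Ω) : ℂ :=
  ∑ j ∈ Finset.range m, alphaHat c pX φ f X Z T n j ω * φ j x

/-- The `m`-term approximation `f_m = ∑_{j<m} α_j φ_j`. -/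
def mApprox {E : Type*} [MeasureSpace E] (D : Set E) (f : E → ℝ) (φ : ℕ → E → ℂ)
    (m : ℕ) (x : E) : ℂ :=
  ∑ j ∈ Finset.range m, coeff D f φ j * φ j x

/-- The integrated mean squared error `E[‖f - f̂_{n,m}‖²]`. -/
def intMSE {E Ω : Type*} [MeasureSpace E] [MeasurableSpace Ω] (P : Measure Ω)
    (D : Set E) (c : ℝ) (pX : E → ℝ) (φ : ℕ → E → ℂ) (f : E → ℝ)
    (X : ℕ → Ω → E) (Z T : ℕ → Ω → ℝ) (n m : ℕ) : ℝ :=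
  ∫ ω, (∫ x in D, ‖(f x : ℂ) - fieldEst c pX φ f X Z T n m x ω‖ ^ 2) ∂P

/-- The `m`-term approximation error `ε[f,m] = ∑_{j≥m} |α_j|²`. -/
def tailErr {E : Type*} [MeasureSpace E] (D : Set E) (f : E → ℝ) (φ : ℕ → E → ℂ)
    (m : ℕ) : ℝ :=
  ∑' j : ℕ, ‖coeff D f φ (m + j)‖ ^ 2

/-- The deployment distribution: density `p_X` (w.r.t. Lebesgue measure) on `D`. -/
def deployLaw {E : Type*} [MeasureSpace E] (D : Set E) (pX : E → ℝ) : Measure E :=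
  (volume.restrict D).withDensity fun x => ENNReal.ofReal (pX x)

/-- The threshold distribution: uniform on `[-c, c]`. -/
def threshLaw (c : ℝ) : Measure ℝ :=
  (ENNReal.ofReal (1 / (2 * c))) • volume.restrict (Set.Icc (-c) c)

end

/-!
Each coefficient estimate is `c` times a Monte Carlo average of i.i.d. copies of
`conj (φ_j X) / p_X X · sgn (f X + Z - T)`. A threshold uniform on `[-c, c]` dithers the one-bit
quantizer, so `E_T sgn (u - T) = u / c` whenever `|u| ≤ c`; with zero-mean noise and the density
weight `1 / p_X` the average is unbiased for `α_j / c`. Its second moment is at most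
`∫ |φ_j|² / p_X ≤ 1 / ν`, so each coefficient has mean squared error at most `c² / (n ν)`.
Parseval splits `‖f - f̂_{n,m}‖²` into the `m` coefficient errors and the tail `ε[f, m] ≤ σ / m`,
and `m = ⌈√n⌉` balances the two terms.
-/

open MeasureTheory ProbabilityTheory Filter
open scoped ENNReal

lemma measurable_sgn' : Measurable sgn' :=
  Measurable.ite measurableSet_Ioi measurable_const measurable_const

lemma abs_sgn' (u : ℝ) : |sgn' u| = 1 := by
  unfold sgn'; split <;> simp

lemma isProbabilityMeasure_threshLaw {c : ℝ} (hc : 0 < c) :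
    IsProbabilityMeasure (threshLaw c) := by
  constructor
  rw [threshLaw, Measure.smul_apply, Measure.restrict_apply MeasurableSet.univ, Set.univ_inter,
    Real.volume_Icc, smul_eq_mul, ← ENNReal.ofReal_mul (by positivity)]
  rw [show 1 / (2 * c) * (c - -c) = 1 by field_simp; ring, ENNReal.ofReal_one]

lemma setIntegral_sgn'_sub_Icc {c u : ℝ} (hu : u ∈ Set.Icc (-c) c) :
    ∫ t in Set.Icc (-c) c, sgn' (u - t) = 2 * u := by
  obtain ⟨hcu, huc⟩ := hu
  have hpos : Set.EqOn (fun t => sgn' (u - t)) (fun _ => 1) (Set.Ico (-c) u) := by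
    intro t ht; simp [sgn', ht.2]
  have hneg : Set.EqOn (fun t => sgn' (u - t)) (fun _ => -1) (Set.Icc u c) := by
    intro t ht; simp [sgn', ht.1]
  have hint_pos : IntegrableOn (fun t => sgn' (u - t)) (Set.Ico (-c) u) :=
    (integrableOn_congr_fun hpos measurableSet_Ico).2 (integrableOn_const (by simp))
  have hint_neg : IntegrableOn (fun t => sgn' (u - t)) (Set.Icc u c) :=
    (integrableOn_congr_fun hneg measurableSet_Icc).2 (integrableOn_const (by simp))
  rw [← Set.Ico_union_Icc_eq_Icc hcu huc,
    setIntegral_union (Set.disjoint_left.2 fun _ h₁ h₂ => h₁.2.not_ge h₂.1) measurableSet_Icc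
      hint_pos hint_neg,
    setIntegral_congr_fun measurableSet_Ico hpos, setIntegral_congr_fun measurableSet_Icc hneg]
  simp [sub_nonneg.2 huc, max_eq_left (by linarith : 0 ≤ u + c)]
  ring

lemma integral_sgn'_sub_threshLaw {c u : ℝ} (hc : 0 < c) (hu : u ∈ Set.Icc (-c) c) :
    ∫ t, sgn' (u - t) ∂threshLaw c = u / c := by
  rw [threshLaw, integral_smul_measure, setIntegral_sgn'_sub_Icc hu,
    ENNReal.toReal_ofReal (by positivity), smul_eq_mul]
  field_simp

lemma integral_sgn'_noise_threshLaw {μZ : Measure ℝ} [IsProbabilityMeasure μZ] {a b c u : ℝ}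
    (hc : c = a + b) (hc0 : 0 < c) (hu : u ∈ Set.Icc (-a) a)
    (hZmean : ∫ z, z ∂μZ = 0) (hZsupp : μZ (Set.Icc (-b) b)ᶜ = 0) :
    ∫ y, sgn' (u + y.1 - y.2) ∂(μZ.prod (threshLaw c)) = u / c := by
  have := isProbabilityMeasure_threshLaw hc0
  have hZ : ∀ᵐ z ∂μZ, z ∈ Set.Icc (-b) b := ae_iff.2 hZsupp
  have hZint : Integrable (fun z : ℝ => z) μZ := by
    refine Integrable.mono' (integrable_const b) measurable_id.aestronglyMeasurable ?_
    filter_upwards [hZ] with z hz using abs_le.2 hz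
  have hsgn_int : Integrable (fun y : ℝ × ℝ => sgn' (u + y.1 - y.2)) (μZ.prod (threshLaw c)) :=
    (integrable_const (1 : ℝ)).mono'
      (measurable_sgn'.comp (by fun_prop)).aestronglyMeasurable
      (Eventually.of_forall fun _ => (abs_sgn' _).le)
  have hinner : ∀ᵐ z ∂μZ, ∫ t, sgn' (u + z - t) ∂threshLaw c = u / c + z * c⁻¹ := by
    filter_upwards [hZ] with z hz
    rw [integral_sgn'_sub_threshLaw hc0 ⟨by linarith [hu.1, hz.1], by linarith [hu.2, hz.2]⟩]
    ring
  rw [integral_prod _ hsgn_int, integral_congr_ae hinner,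
    integral_add (integrable_const _) (hZint.mul_const _), integral_mul_const, hZmean]
  simp

section Lintegral

variable {α : Type*} [MeasurableSpace α] {μ : Measure α} {F : α → ℝ} {M : ℝ}

lemma integrable_of_lintegral_ofReal_le (hF : AEStronglyMeasurable F μ) (hF0 : 0 ≤ᵐ[μ] F)
    (hle : ∫⁻ x, ENNReal.ofReal (F x) ∂μ ≤ ENNReal.ofReal M) : Integrable F μ :=
  ⟨hF, (hasFiniteIntegral_iff_ofReal hF0).2 (hle.trans_lt ENNReal.ofReal_lt_top)⟩

lemma integral_le_of_lintegral_ofReal_le (hF : AEStronglyMeasurable F μ) (hF0 : 0 ≤ᵐ[μ] F)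
    (hM : 0 ≤ M) (hle : ∫⁻ x, ENNReal.ofReal (F x) ∂μ ≤ ENNReal.ofReal M) : ∫ x, F x ∂μ ≤ M := by
  rw [integral_eq_lintegral_of_nonneg_ae hF0 hF]
  exact ENNReal.toReal_le_of_le_ofReal hM hle

end Lintegral

section SampleMean

variable {Ω : Type*} [MeasurableSpace Ω] {P : Measure Ω} [IsProbabilityMeasure P]

lemma integral_norm_sub_integral_sq {W : Ω → ℂ} (hW : MemLp W 2 P) :
    ∫ ω, ‖W ω - ∫ ω', W ω' ∂P‖ ^ 2 ∂P
      = Var[fun ω => (W ω).re; P] + Var[fun ω => (W ω).im; P] := by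
  have hre : MemLp (fun ω => (W ω).re) 2 P := hW.re
  have him : MemLp (fun ω => (W ω).im) 2 P := hW.im
  have hint := hW.integrable one_le_two
  have hre_sq : Integrable (fun ω => ((W ω).re - ∫ ω', (W ω').re ∂P) ^ 2) P :=
    (hre.sub (memLp_const _)).integrable_sq
  have him_sq : Integrable (fun ω => ((W ω).im - ∫ ω', (W ω').im ∂P) ^ 2) P :=
    (him.sub (memLp_const _)).integrable_sq
  rw [variance_eq_integral hre.aemeasurable, variance_eq_integral him.aemeasurable,
    ← integral_add hre_sq him_sq]
  congr 1 with ω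
  have hEre : ∫ ω', (W ω').re ∂P = (∫ ω', W ω' ∂P).re := integral_re hint
  have hEim : ∫ ω', (W ω').im ∂P = (∫ ω', W ω' ∂P).im := integral_im hint
  rw [Complex.sq_norm, Complex.normSq_apply, Complex.sub_re, Complex.sub_im, hEre, hEim]
  ring

lemma variance_re_add_variance_im_le {Y : Ω → ℂ} (hY : MemLp Y 2 P) :
    Var[fun ω => (Y ω).re; P] + Var[fun ω => (Y ω).im; P] ≤ ∫ ω, ‖Y ω‖ ^ 2 ∂P := by
  have hre : MemLp (fun ω => (Y ω).re) 2 P := hY.re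
  have him : MemLp (fun ω => (Y ω).im) 2 P := hY.im
  calc Var[fun ω => (Y ω).re; P] + Var[fun ω => (Y ω).im; P]
      ≤ ∫ ω, (Y ω).re ^ 2 ∂P + ∫ ω, (Y ω).im ^ 2 ∂P :=
        add_le_add (variance_le_expectation_sq hre.1) (variance_le_expectation_sq him.1)
    _ = ∫ ω, ‖Y ω‖ ^ 2 ∂P := by
        rw [← integral_add hre.integrable_sq him.integrable_sq]
        congr 1 with ω
        rw [Complex.sq_norm, Complex.normSq_apply]
        ring

lemma integral_norm_sub_sampleMean_sq_le {Y : ℕ → Ω → ℂ} (hY : ∀ i, MemLp (Y i) 2 P)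
    (hindep : Pairwise fun i j => IndepFun (Y i) (Y j) P) {μ : ℂ}
    (hmean : ∀ i, ∫ ω, Y i ω ∂P = μ) {M : ℝ} (hM : ∀ i, ∫ ω, ‖Y i ω‖ ^ 2 ∂P ≤ M)
    {n : ℕ} (hn : 0 < n) :
    ∫ ω, ‖μ - (n : ℂ)⁻¹ * ∑ i ∈ Finset.range n, Y i ω‖ ^ 2 ∂P ≤ M / n := by
  set W : Ω → ℂ := fun ω => ∑ i ∈ Finset.range n, Y i ω
  have hW : MemLp W 2 P := memLp_finsetSum _ fun i _ => hY i
  have hEW : ∫ ω, W ω ∂P = n * μ := by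
    simp [W, integral_finsetSum _ fun i _ => (hY i).integrable one_le_two, hmean]
  have hnC : (n : ℂ) ≠ 0 := by exact_mod_cast hn.ne'
  have hscale : ∀ ω, ‖μ - (n : ℂ)⁻¹ * W ω‖ ^ 2 = (n : ℝ)⁻¹ ^ 2 * ‖W ω - ∫ ω', W ω' ∂P‖ ^ 2 := by
    intro ω
    rw [hEW, show μ - (n : ℂ)⁻¹ * W ω = -(n : ℂ)⁻¹ * (W ω - n * μ) by field_simp; ring,
      norm_mul, norm_neg, norm_inv, Complex.norm_natCast, mul_pow]
  have hre : ∀ i, MemLp (fun ω => (Y i ω).re) 2 P := fun i => (hY i).re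
  have him : ∀ i, MemLp (fun ω => (Y i ω).im) 2 P := fun i => (hY i).im
  have hre_sum : (fun ω => (W ω).re) = ∑ i ∈ Finset.range n, fun ω => (Y i ω).re := by
    ext ω; simp [W, Complex.re_sum]
  have him_sum : (fun ω => (W ω).im) = ∑ i ∈ Finset.range n, fun ω => (Y i ω).im := by
    ext ω; simp [W, Complex.im_sum]
  have hvar : Var[fun ω => (W ω).re; P] + Var[fun ω => (W ω).im; P] ≤ n * M := by
    rw [hre_sum, him_sum,
      IndepFun.variance_sum (fun i _ => hre i) fun i _ j _ hij =>
        (hindep hij).comp Complex.measurable_re Complex.measurable_re,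
      IndepFun.variance_sum (fun i _ => him i) fun i _ j _ hij =>
        (hindep hij).comp Complex.measurable_im Complex.measurable_im,
      ← Finset.sum_add_distrib]
    calc _ ≤ ∑ _i ∈ Finset.range n, M :=
          Finset.sum_le_sum fun i _ => (variance_re_add_variance_im_le (hY i)).trans (hM i)
      _ = n * M := by simp
  calc ∫ ω, ‖μ - (n : ℂ)⁻¹ * W ω‖ ^ 2 ∂P
      = (n : ℝ)⁻¹ ^ 2 * (Var[fun ω => (W ω).re; P] + Var[fun ω => (W ω).im; P]) := by
        simp_rw [hscale]
        rw [integral_const_mul, integral_norm_sub_integral_sq hW]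
    _ ≤ (n : ℝ)⁻¹ ^ 2 * (n * M) := by gcongr
    _ = M / n := by field_simp

end SampleMean

section MonteCarlo

variable {Ω S : Type*} [MeasurableSpace Ω] [MeasurableSpace S] {P : Measure Ω}
  {V : ℕ → Ω → S} {ρ : Measure S} {g : S → ℂ}

lemma memLp_comp_of_map_eq (hV : ∀ i, Measurable (V i)) (hlaw : ∀ i, P.map (V i) = ρ)
    (hgm : Measurable g) (hg : MemLp g 2 ρ) (i : ℕ) : MemLp (fun ω => g (V i ω)) 2 P := by
  rw [← hlaw i] at hg
  exact (memLp_map_measure_iff hgm.aestronglyMeasurable (hV i).aemeasurable).1 hg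

lemma integral_norm_sub_monteCarlo_sq_le [IsProbabilityMeasure P] (hV : ∀ i, Measurable (V i))
    (hlaw : ∀ i, P.map (V i) = ρ) (hindep : iIndepFun V P) (hgm : Measurable g)
    (hg : MemLp g 2 ρ) {n : ℕ} (hn : 0 < n) :
    ∫ ω, ‖∫ s, g s ∂ρ - (n : ℂ)⁻¹ * ∑ i ∈ Finset.range n, g (V i ω)‖ ^ 2 ∂P
      ≤ (∫ s, ‖g s‖ ^ 2 ∂ρ) / n := by
  refine integral_norm_sub_sampleMean_sq_le (memLp_comp_of_map_eq hV hlaw hgm hg)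
    (fun i j hij => (hindep.indepFun hij).comp hgm hgm) (fun i => ?_) (fun i => ?_) hn
  · rw [← hlaw i, integral_map (hV i).aemeasurable hgm.aestronglyMeasurable]
  · rw [← hlaw i, integral_map (hV i).aemeasurable (by fun_prop)]

end MonteCarlo

section Parseval

variable {α : Type*} [MeasurableSpace α] {μ : Measure α} {φ : ℕ → α → ℂ}

lemma integral_norm_sq_eq_one {g : α → ℂ}
    (hg : ∫ x, g x * (starRingEnd ℂ) (g x) ∂μ = 1) : ∫ x, ‖g x‖ ^ 2 ∂μ = 1 := by
  simp_rw [Complex.mul_conj, Complex.normSq_eq_norm_sq] at hg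
  rw [integral_complex_ofReal] at hg
  exact_mod_cast hg

lemma integrable_mul_conj {g h : α → ℂ} (hg : MemLp g 2 μ) (hh : MemLp h 2 μ) :
    Integrable (fun x => g x * (starRingEnd ℂ) (h x)) μ :=
  hg.integrable_mul hh.star

lemma integral_partialSum_mul_conj (hφ : ∀ j, MemLp (φ j) 2 μ)
    (hON : ∀ j k, ∫ x, φ j x * (starRingEnd ℂ) (φ k x) ∂μ = if j = k then 1 else 0)
    (β : ℕ → ℂ) (m k : ℕ) :
    ∫ x, (∑ j ∈ Finset.range m, β j * φ j x) * (starRingEnd ℂ) (φ k x) ∂μ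
      = if k < m then β k else 0 := by
  simp_rw [Finset.sum_mul, mul_assoc]
  rw [integral_finsetSum _ fun j _ => (integrable_mul_conj (hφ j) (hφ k)).const_mul (β j)]
  simp_rw [integral_const_mul, hON, mul_ite, mul_one, mul_zero]
  simp [Finset.sum_ite_eq']

/-- Parseval for `G - ∑_{j<m} β_j φ_j`, whose coefficients are `⟨G, φ_j⟩ - β_j` below `m` and
`⟨G, φ_j⟩` from `m` on; only an inequality since `tsum` is `0` on non-summable families. -/
lemma integral_norm_sub_partialSum_sq_le (hφm : ∀ j, Measurable (φ j))
    (hφ : ∀ j, MemLp (φ j) 2 μ)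
    (hON : ∀ j k, ∫ x, φ j x * (starRingEnd ℂ) (φ k x) ∂μ = if j = k then 1 else 0)
    (hComplete : ∀ g : α → ℂ, Measurable g → MemLp g 2 μ →
      ∑' j, ‖∫ x, g x * (starRingEnd ℂ) (φ j x) ∂μ‖ ^ 2 = ∫ x, ‖g x‖ ^ 2 ∂μ)
    {G : α → ℂ} (hGm : Measurable G) (hG : MemLp G 2 μ) (β : ℕ → ℂ) (m : ℕ) :
    ∫ x, ‖G x - ∑ j ∈ Finset.range m, β j * φ j x‖ ^ 2 ∂μ
      ≤ ∑ j ∈ Finset.range m, ‖∫ x, G x * (starRingEnd ℂ) (φ j x) ∂μ - β j‖ ^ 2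
        + ∑' j, ‖∫ x, G x * (starRingEnd ℂ) (φ (m + j) x) ∂μ‖ ^ 2 := by
  set R : α → ℂ := fun x => G x - ∑ j ∈ Finset.range m, β j * φ j x
  have hRm : Measurable R := hGm.sub (Finset.measurable_sum _ fun j _ => (hφm j).const_mul _)
  have hR : MemLp R 2 μ := hG.sub (memLp_finsetSum _ fun j _ => (hφ j).const_mul _)
  have hcoeff : ∀ k, ∫ x, R x * (starRingEnd ℂ) (φ k x) ∂μ
      = ∫ x, G x * (starRingEnd ℂ) (φ k x) ∂μ - if k < m then β k else 0 := by
    intro k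
    simp_rw [R, sub_mul]
    rw [integral_sub (integrable_mul_conj hG (hφ k))
      (integrable_mul_conj (memLp_finsetSum _ fun j _ => (hφ j).const_mul _) (hφ k)),
      integral_partialSum_mul_conj hφ hON]
  rw [← hComplete R hRm hR]
  by_cases hsum : Summable fun k => ‖∫ x, R x * (starRingEnd ℂ) (φ k x) ∂μ‖ ^ 2
  · rw [← hsum.sum_add_tsum_nat_add m]
    refine le_of_eq (congr_arg₂ _ (Finset.sum_congr rfl fun k hk => ?_) (tsum_congr fun k => ?_))
    · rw [hcoeff, if_pos (Finset.mem_range.1 hk)]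
    · rw [hcoeff, if_neg (by omega), sub_zero, add_comm]
  · rw [tsum_eq_zero_of_not_summable hsum]
    positivity

end Parseval

section Sensor

variable {E : Type*}

noncomputable def sensorTerm (pX : E → ℝ) (φ : ℕ → E → ℂ) (f : E → ℝ) (j : ℕ) (p : E × ℝ × ℝ) : ℂ :=
  (starRingEnd ℂ) (φ j p.1) / (pX p.1 : ℂ) * (sgn' (f p.1 + p.2.1 - p.2.2) : ℂ)

lemma alphaHat_eq_sum_sensorTerm {Ω : Type*} (c : ℝ) (pX : E → ℝ) (φ : ℕ → E → ℂ)
    (f : E → ℝ) (X : ℕ → Ω → E) (Z T : ℕ → Ω → ℝ) (n j : ℕ) (ω : Ω) :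
    alphaHat c pX φ f X Z T n j ω
      = c * ((n : ℂ)⁻¹ * ∑ i ∈ Finset.range n, sensorTerm pX φ f j (X i ω, Z i ω, T i ω)) := by
  rw [alphaHat, div_eq_mul_inv, mul_assoc]
  rfl

lemma norm_sensorTerm (pX : E → ℝ) (φ : ℕ → E → ℂ) (f : E → ℝ) (j : ℕ) (p : E × ℝ × ℝ) :
    ‖sensorTerm pX φ f j p‖ = ‖φ j p.1‖ / |pX p.1| := by
  simp [sensorTerm, abs_sgn']

variable [MeasureSpace E] {D : Set E} {pX : E → ℝ} {φ : ℕ → E → ℂ} {f : E → ℝ} {j : ℕ}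

lemma measurable_sensorTerm (hpX : Measurable pX) (hφ : Measurable (φ j)) (hf : Measurable f) :
    Measurable (sensorTerm pX φ f j) := by
  unfold sensorTerm
  have hsgn : Measurable fun p : E × ℝ × ℝ => sgn' (f p.1 + p.2.1 - p.2.2) :=
    measurable_sgn'.comp (by fun_prop)
  fun_prop

lemma lintegral_sensorTerm_sq_le (hD : MeasurableSet D) {ν : ℝ} (hν : 0 < ν)
    (hνpX : ∀ x ∈ D, ν ≤ pX x) (hpX : Measurable pX) (hφm : Measurable (φ j))
    (hφ : MemLp (φ j) 2 (volume.restrict D)) (ρ : Measure (ℝ × ℝ)) [IsProbabilityMeasure ρ] :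
    ∫⁻ p, ENNReal.ofReal (‖sensorTerm pX φ f j p‖ ^ 2) ∂((deployLaw D pX).prod ρ)
      ≤ ENNReal.ofReal ((∫ x in D, ‖φ j x‖ ^ 2) / ν) := by
  have hFm : Measurable fun x => ENNReal.ofReal ((‖φ j x‖ / |pX x|) ^ 2) := by fun_prop
  calc ∫⁻ p, ENNReal.ofReal (‖sensorTerm pX φ f j p‖ ^ 2) ∂((deployLaw D pX).prod ρ)
      = ∫⁻ x, ∫⁻ _ : ℝ × ℝ, ENNReal.ofReal ((‖φ j x‖ / |pX x|) ^ 2) ∂ρ ∂deployLaw D pX := by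
        simp_rw [norm_sensorTerm]
        exact lintegral_prod _ (hFm.comp measurable_fst).aemeasurable
    _ = ∫⁻ x in D, ENNReal.ofReal (pX x) * ENNReal.ofReal ((‖φ j x‖ / |pX x|) ^ 2) := by
        simp only [lintegral_const, measure_univ, mul_one]
        exact lintegral_withDensity_eq_lintegral_mul _ hpX.ennreal_ofReal hFm
    _ ≤ ∫⁻ x in D, ENNReal.ofReal (‖φ j x‖ ^ 2 / ν) := by
        refine setLIntegral_mono' hD fun x hx => ?_
        have hpos : 0 < pX x := hν.trans_le (hνpX x hx)
        rw [← ENNReal.ofReal_mul hpos.le, abs_of_pos hpos, div_pow,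
          show pX x * (‖φ j x‖ ^ 2 / pX x ^ 2) = ‖φ j x‖ ^ 2 / pX x by field_simp]
        exact ENNReal.ofReal_le_ofReal (div_le_div_of_nonneg_left (by positivity) hν (hνpX x hx))
    _ = ENNReal.ofReal ((∫ x in D, ‖φ j x‖ ^ 2) / ν) := by
        have hint := ((memLp_two_iff_integrable_sq_norm hφ.1).1 hφ).div_const ν
        rw [← integral_div, ofReal_integral_eq_lintegral_ofReal hint
          (Eventually.of_forall fun x => by positivity)]

lemma memLp_sensorTerm (hD : MeasurableSet D) {ν : ℝ} (hν : 0 < ν)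
    (hνpX : ∀ x ∈ D, ν ≤ pX x) (hpX : Measurable pX) (hφm : Measurable (φ j)) (hf : Measurable f)
    (hφ : MemLp (φ j) 2 (volume.restrict D)) (ρ : Measure (ℝ × ℝ)) [IsProbabilityMeasure ρ] :
    MemLp (sensorTerm pX φ f j) 2 ((deployLaw D pX).prod ρ) :=
  have hm := (measurable_sensorTerm hpX hφm hf).aestronglyMeasurable
  (memLp_two_iff_integrable_sq_norm hm).2 <| integrable_of_lintegral_ofReal_le (by fun_prop)
    (ae_of_all _ fun _ => sq_nonneg _) (lintegral_sensorTerm_sq_le hD hν hνpX hpX hφm hφ ρ)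

lemma integral_norm_sensorTerm_sq_le (hD : MeasurableSet D) {ν : ℝ} (hν : 0 < ν)
    (hνpX : ∀ x ∈ D, ν ≤ pX x) (hpX : Measurable pX) (hφm : Measurable (φ j)) (hf : Measurable f)
    (hφ : MemLp (φ j) 2 (volume.restrict D)) (ρ : Measure (ℝ × ℝ)) [IsProbabilityMeasure ρ] :
    ∫ p, ‖sensorTerm pX φ f j p‖ ^ 2 ∂((deployLaw D pX).prod ρ)
      ≤ (∫ x in D, ‖φ j x‖ ^ 2) / ν :=
  integral_le_of_lintegral_ofReal_le
    ((measurable_sensorTerm hpX hφm hf).aestronglyMeasurable.norm.pow 2)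
    (ae_of_all _ fun _ => sq_nonneg _) (by positivity)
    (lintegral_sensorTerm_sq_le hD hν hνpX hpX hφm hφ ρ)

instance [SFinite (volume : Measure E)] : SFinite (deployLaw D pX) := by
  unfold deployLaw; infer_instance

lemma integral_sensorTerm [SFinite (volume : Measure E)] (hD : MeasurableSet D) {a b c : ℝ}
    (hc : c = a + b) (hc0 : 0 < c) (hfbd : ∀ x ∈ D, f x ∈ Set.Icc (-a) a)
    (hpX : Measurable pX) (hpos : ∀ x ∈ D, 0 < pX x)
    {μZ : Measure ℝ} [IsProbabilityMeasure μZ]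
    (hZmean : ∫ z, z ∂μZ = 0) (hZsupp : μZ (Set.Icc (-b) b)ᶜ = 0)
    (hint : Integrable (sensorTerm pX φ f j) ((deployLaw D pX).prod (μZ.prod (threshLaw c)))) :
    ∫ p, sensorTerm pX φ f j p ∂((deployLaw D pX).prod (μZ.prod (threshLaw c)))
      = coeff D f φ j / c := by
  have := isProbabilityMeasure_threshLaw hc0
  have hD_ae : ∀ᵐ x ∂deployLaw D pX, x ∈ D :=
    (withDensity_absolutelyContinuous _ _).ae_le (ae_restrict_mem hD)
  have hinner : ∀ᵐ x ∂deployLaw D pX,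
      ∫ y, sensorTerm pX φ f j (x, y) ∂(μZ.prod (threshLaw c))
        = (starRingEnd ℂ) (φ j x) / (pX x : ℂ) * ((f x / c : ℝ) : ℂ) := by
    filter_upwards [hD_ae] with x hx
    simp only [sensorTerm]
    rw [integral_const_mul, ← integral_sgn'_noise_threshLaw hc hc0 (hfbd x hx) hZmean hZsupp]
    exact congr_arg _ integral_complex_ofReal
  rw [integral_prod _ hint, integral_congr_ae hinner, deployLaw,
    show (fun x => ENNReal.ofReal (pX x)) = fun x => ((pX x).toNNReal : ℝ≥0∞) from rfl,
    integral_withDensity_eq_integral_smul (by fun_prop), coeff, ← integral_div]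
  refine setIntegral_congr_fun hD fun x hx => ?_
  have hpX0 : (pX x : ℂ) ≠ 0 := Complex.ofReal_ne_zero.2 (hpos x hx).ne'
  simp only [NNReal.smul_def, Real.coe_toNNReal _ (hpos x hx).le, Complex.real_smul]
  push_cast
  field_simp

end Sensor

section Estimator

variable {E Ω : Type*} [MeasureSpace E] [MeasurableSpace Ω] {P : Measure Ω} {D : Set E} {c : ℝ}
  {pX : E → ℝ} {φ : ℕ → E → ℂ} {f : E → ℝ} {X : ℕ → Ω → E} {Z T : ℕ → Ω → ℝ}
  {ρ : Measure (E × ℝ × ℝ)} {j : ℕ}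

lemma memLp_alphaHat (htup : ∀ i, Measurable fun ω => (X i ω, Z i ω, T i ω))
    (hlaw : ∀ i, P.map (fun ω => (X i ω, Z i ω, T i ω)) = ρ)
    (hgm : Measurable (sensorTerm pX φ f j)) (hg : MemLp (sensorTerm pX φ f j) 2 ρ) (n : ℕ) :
    MemLp (alphaHat c pX φ f X Z T n j) 2 P := by
  rw [show alphaHat c pX φ f X Z T n j = _ from
    funext fun ω => alphaHat_eq_sum_sensorTerm c pX φ f X Z T n j ω]
  exact ((memLp_finsetSum _ fun i _ => memLp_comp_of_map_eq htup hlaw hgm hg i).const_mul _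
    ).const_mul _

lemma integral_norm_sub_alphaHat_sq_le [IsProbabilityMeasure P]
    (htup : ∀ i, Measurable fun ω => (X i ω, Z i ω, T i ω))
    (hlaw : ∀ i, P.map (fun ω => (X i ω, Z i ω, T i ω)) = ρ)
    (hiid : iIndepFun (fun i ω => (X i ω, Z i ω, T i ω)) P)
    (hgm : Measurable (sensorTerm pX φ f j)) (hg : MemLp (sensorTerm pX φ f j) 2 ρ)
    (hc : c ≠ 0) {θ : ℂ} (hmean : ∫ p, sensorTerm pX φ f j p ∂ρ = θ / c) {n : ℕ} (hn : 0 < n) :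
    ∫ ω, ‖θ - alphaHat c pX φ f X Z T n j ω‖ ^ 2 ∂P
      ≤ c ^ 2 * (∫ p, ‖sensorTerm pX φ f j p‖ ^ 2 ∂ρ) / n := by
  have hcC : (c : ℂ) ≠ 0 := Complex.ofReal_ne_zero.2 hc
  have hscale : ∀ ω, ‖θ - alphaHat c pX φ f X Z T n j ω‖ ^ 2 = c ^ 2 * ‖θ / c - (n : ℂ)⁻¹ *
      ∑ i ∈ Finset.range n, sensorTerm pX φ f j (X i ω, Z i ω, T i ω)‖ ^ 2 := by
    intro ω
    rw [alphaHat_eq_sum_sensorTerm, ← sq_abs c, ← Real.norm_eq_abs, ← Complex.norm_real,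
      ← mul_pow, ← norm_mul, mul_sub, mul_div_cancel₀ θ hcC]
  simp_rw [hscale]
  rw [integral_const_mul, mul_div_assoc, ← hmean]
  gcongr
  exact integral_norm_sub_monteCarlo_sq_le htup hlaw hiid hgm hg hn

lemma intMSE_le_sum_add_tailErr [IsProbabilityMeasure P] (hφm : ∀ j, Measurable (φ j))
    (hφ : ∀ j, MemLp (φ j) 2 (volume.restrict D))
    (hON : ∀ j k, ∫ x in D, φ j x * (starRingEnd ℂ) (φ k x) = if j = k then 1 else 0)
    (hComplete : ∀ g : E → ℂ, Measurable g → MemLp g 2 (volume.restrict D) →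
      ∑' j, ‖∫ x in D, g x * (starRingEnd ℂ) (φ j x)‖ ^ 2 = ∫ x in D, ‖g x‖ ^ 2)
    (hfm : Measurable f) (hf : MemLp (fun x => (f x : ℂ)) 2 (volume.restrict D)) {n : ℕ}
    (hα : ∀ j, MemLp (alphaHat c pX φ f X Z T n j) 2 P) (m : ℕ) :
    intMSE P D c pX φ f X Z T n m
      ≤ ∑ j ∈ Finset.range m, ∫ ω, ‖coeff D f φ j - alphaHat c pX φ f X Z T n j ω‖ ^ 2 ∂P
        + tailErr D f φ m := by
  have hint : ∀ j, Integrable (fun ω => ‖coeff D f φ j - alphaHat c pX φ f X Z T n j ω‖ ^ 2) P :=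
    fun j => ((memLp_const _).sub (hα j)).norm.integrable_sq
  calc intMSE P D c pX φ f X Z T n m
      ≤ ∫ ω, (∑ j ∈ Finset.range m, ‖coeff D f φ j - alphaHat c pX φ f X Z T n j ω‖ ^ 2
          + tailErr D f φ m) ∂P :=
        integral_mono_of_nonneg (Eventually.of_forall fun ω => by positivity)
          ((integrable_finsetSum _ fun j _ => hint j).add (integrable_const _))
          (Eventually.of_forall fun ω => integral_norm_sub_partialSum_sq_le hφm hφ hON hComplete
            (by fun_prop) hf (fun j => alphaHat c pX φ f X Z T n j ω) m)
    _ = _ := by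
        rw [integral_add (integrable_finsetSum _ fun j _ => hint j) (integrable_const _),
          integral_finsetSum _ fun j _ => hint j, integral_const]
        simp

lemma integral_norm_coeff_sub_alphaHat_sq_le [SFinite (volume : Measure E)]
    [IsProbabilityMeasure P] (hD : MeasurableSet D) {a b : ℝ} (hc : c = a + b) (hc0 : 0 < c)
    (hfm : Measurable f) (hfbd : ∀ x ∈ D, f x ∈ Set.Icc (-a) a) (hpX : Measurable pX)
    (hpos : ∀ x ∈ D, 0 < pX x) (hφm : Measurable (φ j)) (hφ : MemLp (φ j) 2 (volume.restrict D))
    (hφ1 : ∫ x in D, ‖φ j x‖ ^ 2 = 1) {μZ : Measure ℝ} [IsProbabilityMeasure μZ]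
    (hZmean : ∫ z, z ∂μZ = 0) (hZsupp : μZ (Set.Icc (-b) b)ᶜ = 0)
    (htup : ∀ i, Measurable fun ω => (X i ω, Z i ω, T i ω))
    (hlaw : ∀ i, P.map (fun ω => (X i ω, Z i ω, T i ω))
      = (deployLaw D pX).prod (μZ.prod (threshLaw c)))
    (hiid : iIndepFun (fun i ω => (X i ω, Z i ω, T i ω)) P)
    {ν : ℝ} (hν : 0 < ν) (hνpX : ∀ x ∈ D, ν ≤ pX x) {n : ℕ} (hn : 0 < n) :
    ∫ ω, ‖coeff D f φ j - alphaHat c pX φ f X Z T n j ω‖ ^ 2 ∂P ≤ c ^ 2 / (n * ν) := by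
  have := isProbabilityMeasure_threshLaw hc0
  have : IsProbabilityMeasure ((deployLaw D pX).prod (μZ.prod (threshLaw c))) :=
    hlaw 0 ▸ Measure.isProbabilityMeasure_map (htup 0).aemeasurable
  have hg := memLp_sensorTerm hD hν hνpX hpX hφm hfm hφ (μZ.prod (threshLaw c))
  have hmean := integral_sensorTerm hD hc hc0 hfbd hpX hpos hZmean hZsupp (hg.integrable one_le_two)
  have hsq := integral_norm_sensorTerm_sq_le hD hν hνpX hpX hφm hfm hφ (μZ.prod (threshLaw c))
  rw [hφ1] at hsq
  calc _ ≤ c ^ 2 * (∫ p, ‖sensorTerm pX φ f j p‖ ^ 2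
          ∂((deployLaw D pX).prod (μZ.prod (threshLaw c)))) / n :=
        integral_norm_sub_alphaHat_sq_le htup hlaw hiid (measurable_sensorTerm hpX hφm hfm) hg
          hc0.ne' hmean hn
    _ ≤ c ^ 2 * (1 / ν) / n := by gcongr
    _ = c ^ 2 / (n * ν) := by field_simp

end Estimator

lemma add_div_ceil_sqrt_le {A σ : ℝ} (hA : 0 ≤ A) (hσ : 0 ≤ σ) {n : ℕ} (hn : 0 < n) :
    A * ⌈√(n : ℝ)⌉₊ / n + σ / ⌈√(n : ℝ)⌉₊ ≤ (2 * A + σ) / √(n : ℝ) := by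
  have hs0 : 0 < √(n : ℝ) := Real.sqrt_pos.2 (by exact_mod_cast hn)
  have hs1 : 1 ≤ √(n : ℝ) := Real.one_le_sqrt.2 (by exact_mod_cast hn)
  have hm_ge : √(n : ℝ) ≤ ⌈√(n : ℝ)⌉₊ := Nat.le_ceil _
  have hm_le : (⌈√(n : ℝ)⌉₊ : ℝ) ≤ 2 * √(n : ℝ) := by
    linarith [Nat.ceil_lt_add_one hs0.le]
  have hn_eq : (n : ℝ) = √(n : ℝ) * √(n : ℝ) := (Real.mul_self_sqrt (Nat.cast_nonneg n)).symm
  calc A * ⌈√(n : ℝ)⌉₊ / n + σ / ⌈√(n : ℝ)⌉₊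
      ≤ A * (2 * √(n : ℝ)) / (√(n : ℝ) * √(n : ℝ)) + σ / √(n : ℝ) := by
        rw [← hn_eq]
        gcongr
    _ = (2 * A + σ) / √(n : ℝ) := by field_simp

theorem stmt17_general
    {D : Set ℝ} (hD : D = Set.Icc (0 : ℝ) 1)
    {a b c : ℝ} (ha : 0 < a) (hb : 0 < b) (hc : c = a + b)
    {f : ℝ → ℝ} (hfmeas : Measurable f)
    (hfbd : ∀ x ∈ D, f x ∈ Set.Icc (-a) a)
    {pX : ℝ → ℝ} (hpXmeas : Measurable pX)
    (hpXpos : ∀ x ∈ D, 0 < pX x)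
    {φ : ℕ → ℝ → ℂ} (hφmeas : ∀ j, Measurable (φ j))
    (hφL2 : ∀ j, MemLp (φ j) 2 (volume.restrict D))
    (hON : ∀ j k, (∫ x in D, φ j x * (starRingEnd ℂ) (φ k x)) = if j = k then 1 else 0)
    (hComplete : ∀ g : ℝ → ℂ, Measurable g → MemLp g 2 (volume.restrict D) →
      (∑' j : ℕ, ‖∫ x in D, g x * (starRingEnd ℂ) (φ j x)‖ ^ 2) = ∫ x in D, ‖g x‖ ^ 2)
    {Ω : Type*} [MeasurableSpace Ω] (P : Measure Ω) [IsProbabilityMeasure P]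
    (X : ℕ → Ω → ℝ) (Z T : ℕ → Ω → ℝ)
    (hXmeas : ∀ i, Measurable (X i)) (hZmeas : ∀ i, Measurable (Z i))
    (hTmeas : ∀ i, Measurable (T i))
    (μZ : Measure ℝ) [IsProbabilityMeasure μZ]
    (hZmean : (∫ z, z ∂μZ) = 0) (hZsupp : μZ (Set.Icc (-b) b)ᶜ = 0)
    (hlaw : ∀ i, Measure.map (fun ω => (X i ω, Z i ω, T i ω)) P =
      (deployLaw D pX).prod (μZ.prod (threshLaw c)))
    (hiid : iIndepFun (fun i ω => (X i ω, Z i ω, T i ω)) P)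
    {ν : ℝ} (hν : 0 < ν) (hνinf : ∀ x ∈ D, ν ≤ pX x)
    {σ : ℝ} (hσ : 0 < σ)
    (happrox : ∀ m : ℕ, 1 ≤ m → tailErr D f φ m ≤ σ / m) :
    (∀ n m : ℕ, 0 < n → 1 ≤ m →
      intMSE P D c pX φ f X Z T n m ≤ c ^ 2 * m / (n * ν) + σ / m)
    ∧ ∃ K : ℝ, ∀ n : ℕ, 0 < n →
        intMSE P D c pX φ f X Z T n ⌈Real.sqrt n⌉₊ ≤ K / Real.sqrt n := by
  have hDm : MeasurableSet D := hD ▸ measurableSet_Icc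
  have : IsFiniteMeasure (volume.restrict D) := hD ▸ inferInstance
  have hc0 : 0 < c := hc ▸ add_pos ha hb
  have := isProbabilityMeasure_threshLaw hc0
  have htup : ∀ i, Measurable fun ω => (X i ω, Z i ω, T i ω) :=
    fun i => (hXmeas i).prodMk ((hZmeas i).prodMk (hTmeas i))
  have hφ1 : ∀ j, ∫ x in D, ‖φ j x‖ ^ 2 = 1 :=
    fun j => integral_norm_sq_eq_one (by simpa using hON j j)
  have hf : MemLp (fun x => (f x : ℂ)) 2 (volume.restrict D) :=
    MemLp.of_bound (by fun_prop) a <| (ae_restrict_mem hDm).mono fun x hx => by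
      simpa [abs_le] using hfbd x hx
  have hMSE : ∀ n m : ℕ, 0 < n → 1 ≤ m →
      intMSE P D c pX φ f X Z T n m ≤ c ^ 2 * m / (n * ν) + σ / m := by
    intro n m hn hm
    calc _ ≤ _ := intMSE_le_sum_add_tailErr hφmeas hφL2 hON hComplete hfmeas hf
          (fun j => memLp_alphaHat htup hlaw (measurable_sensorTerm hpXmeas (hφmeas j) hfmeas)
            (memLp_sensorTerm hDm hν hνinf hpXmeas (hφmeas j) hfmeas (hφL2 j) _) n) m
      _ ≤ ∑ _j ∈ Finset.range m, c ^ 2 / (n * ν) + σ / m :=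
          add_le_add (Finset.sum_le_sum fun j _ => integral_norm_coeff_sub_alphaHat_sq_le hDm hc
            hc0 hfmeas hfbd hpXmeas hpXpos (hφmeas j) (hφL2 j) (hφ1 j) hZmean hZsupp htup hlaw
            hiid hν hνinf hn) (happrox m hm)
      _ = c ^ 2 * m / (n * ν) + σ / m := by simp; ring
  refine ⟨hMSE, 2 * (c ^ 2 / ν) + σ, fun n hn => ?_⟩
  set m := ⌈√(n : ℝ)⌉₊
  calc _ ≤ c ^ 2 * m / (n * ν) + σ / m := hMSE n m hn (Nat.one_le_ceil_iff.2 (by positivity))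
    _ = c ^ 2 / ν * m / n + σ / m := by ring
    _ ≤ _ := add_div_ceil_sqrt_le (by positivity) hσ.le hn

/-- **Decay rate of the integrated MSE under an `O(1/m)` approximation error
(Corollary 4, bounded-variation fields on `[0,1]`):**
`E[‖f − f̂_(n,m)‖²] ≤ c² m/(n ν) + σ/m`, and for `m(n) = ⌈√n⌉` the MSE is `O(1/√n)`. -/
theorem stmt17
    {D : Set ℝ} (hD : D = Set.Icc (0 : ℝ) 1)
    {a b c : ℝ} (ha : 0 < a) (hb : 0 < b) (hc : c = a + b)
    {f : ℝ → ℝ} (hfmeas : Measurable f)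
    (hfbd : ∀ x ∈ D, f x ∈ Set.Icc (-a) a)
    {pX : ℝ → ℝ} (hpXmeas : Measurable pX)
    (hpXpos : ∀ x ∈ D, 0 < pX x) (hpXone : (∫ x in D, pX x) = 1)
    {φ : ℕ → ℝ → ℂ} (hφmeas : ∀ j, Measurable (φ j))
    (hφL2 : ∀ j, MemLp (φ j) 2 (volume.restrict D))
    (hON : ∀ j k, (∫ x in D, φ j x * (starRingEnd ℂ) (φ k x)) = if j = k then 1 else 0)
    (hComplete : ∀ g : ℝ → ℂ, Measurable g → MemLp g 2 (volume.restrict D) →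
      (∑' j : ℕ, ‖∫ x in D, g x * (starRingEnd ℂ) (φ j x)‖ ^ 2) = ∫ x in D, ‖g x‖ ^ 2)
    {Ω : Type*} [MeasurableSpace Ω] (P : Measure Ω) [IsProbabilityMeasure P]
    (X : ℕ → Ω → ℝ) (Z T : ℕ → Ω → ℝ)
    (hXmeas : ∀ i, Measurable (X i)) (hZmeas : ∀ i, Measurable (Z i))
    (hTmeas : ∀ i, Measurable (T i))
    (μZ : Measure ℝ) [IsProbabilityMeasure μZ]
    (hZmean : (∫ z, z ∂μZ) = 0) (hZsupp : μZ (Set.Icc (-b) b)ᶜ = 0)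
    (hlaw : ∀ i, Measure.map (fun ω => (X i ω, Z i ω, T i ω)) P =
      (deployLaw D pX).prod (μZ.prod (threshLaw c)))
    (hiid : iIndepFun (fun i ω => (X i ω, Z i ω, T i ω)) P)
    {ν : ℝ} (hν : 0 < ν) (hνinf : ∀ x ∈ D, ν ≤ pX x)
    {σ : ℝ} (hσ : 0 < σ)
    (happrox : ∀ m : ℕ, 1 ≤ m → tailErr D f φ m ≤ σ / m) :
    (∀ n m : ℕ, 0 < n → 1 ≤ m →
      intMSE P D c pX φ f X Z T n m ≤ c ^ 2 * m / (n * ν) + σ / m)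
    ∧ ∃ K : ℝ, ∀ n : ℕ, 0 < n →
        intMSE P D c pX φ f X Z T n ⌈Real.sqrt n⌉₊ ≤ K / Real.sqrt n :=
  stmt17_general hD ha hb hc hfmeas hfbd hpXmeas hpXpos hφmeas hφL2 hON hComplete P X Z T hXmeas
    hZmeas hTmeas μZ hZmean hZsupp hlaw hiid hν hνinf hσ happrox
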